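/- Let Γ be a colored tree and let φ : ℂ[x_d : d ∈ E(Γ)] → ℂ[M] be the ℂ-algebra homomorphism from the polynomial ring on the edge variables to the group algebra of M sending x_d to t^{w_d}. Then the kernel of φ is the ideal generated by the binomials ∏_{d ∈ A} x_d − ∏_{d ∈ B} x_d, over all pairs of disjoint finite multisets A, B of edges with A ∼ B; consequently the quotient of ℂ[x_d : d ∈ E(Γ)] by this binomial ideal is isomorphic to the affine semigroup algebra ℂ[χ(Γ)], the ℂ-subalgebra of ℂ[M] generated by {t^{w_d} : d ∈ E(Γ)}. -/

import Mathlib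

noncomputable section
open Classical

/-- A rose tree whose leaves ("colored vertices") carry labels of type `α` and whose
internal vertices ("uncolored vertices") are unlabelled. -/
inductive CTree (α : Type) : Type
  | leaf (a : α) : CTree α
  | node (ts : List (CTree α)) : CTree α

namespace CTree

variable {α : Type}

/-- The subtree of `t` at a position `p` (a list of child indices), if it exists. -/
def sub : CTree α → List ℕ → Option (CTree α)
  | t, [] => some t
  | leaf _, _ :: _ => none
  | node ts, i :: p =>
      match ts[i]? with
      | some c => sub c p
      | none => none

/-- All lists of natural numbers of length at most `k` with entries `< m`. -/
def allLists (m : ℕ) : ℕ → List (List ℕ)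
  | 0 => [[]]
  | k + 1 => [] :: (List.range m).flatMap (fun i => (allLists m k).map (i :: ·))

/-- The finite set of positions of vertices of `t`. -/
def vertS (t : CTree α) : Finset (List ℕ) :=
  (allLists (sizeOf t) (sizeOf t)).toFinset.filter (fun p => (t.sub p).isSome)

/-- The finite set of positions of uncolored (internal) vertices of `t`. -/
def uncS (t : CTree α) : Finset (List ℕ) :=
  (allLists (sizeOf t) (sizeOf t)).toFinset.filter (fun p => ∃ ts, t.sub p = some (node ts))

/-- The finite set of positions of colored vertices (leaves) of `t`. -/
def colS (t : CTree α) : Finset (List ℕ) :=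
  (allLists (sizeOf t) (sizeOf t)).toFinset.filter (fun p => ∃ a, t.sub p = some (leaf a))

/-- Edges of `t` are identified with the positions of non-root vertices (an edge joins
the vertex at `p ≠ []` to its parent at `p.dropLast`). -/
def edgeS (t : CTree α) : Finset (List ℕ) := (vertS t).erase []

/-- `t` is a colored tree: every internal vertex has at least one child (so the leaves,
i.e. the childless vertices, are exactly the colored vertices) and the root is
uncolored. -/
def IsColoredTree (t : CTree α) : Prop :=
  (∀ p, t.sub p ≠ some (node ([] : List (CTree α)))) ∧ ∃ ts, t = node ts

/-- The weight `w_d ∈ M` of an edge `d`: the sum of the dual basis vectors `e_u^*`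
over uncolored vertices `u` that are descendants of the upper endpoint of `d` but not
descendants of the lower endpoint of `d`. -/
def wt (t : CTree α) (d : List ℕ) : List ℕ → ℤ := fun u =>
  if u ∈ uncS t ∧ d.dropLast <+: u ∧ ¬ d <+: u then 1 else 0

/-- `s_v ∈ M` : the sum of `e_u^*` over the uncolored descendants `u` of `v`;
`s(Γ) = sv t []`. -/
def sv (t : CTree α) (v : List ℕ) : List ℕ → ℤ := fun u =>
  if u ∈ uncS t ∧ v <+: u then 1 else 0

/-- The pairing between `M = Hom(ℤ^g, ℤ)` and `ℤ^g` (both realized as integer-valued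
functions on the uncolored vertices of `t`). -/
def pairZ (t : CTree α) (μ x : List ℕ → ℤ) : ℤ := ∑ p ∈ uncS t, μ p * x p

/-- The pairing between `M` and `ℝ^g`. -/
def pairR (t : CTree α) (μ : List ℕ → ℤ) (x : List ℕ → ℝ) : ℝ :=
  ∑ p ∈ uncS t, (μ p : ℝ) * x p

/-- The multiset of edges of the (downward) path from the vertex `v` to the vertex `c`;
each edge occurs with multiplicity one. -/
def pathEdges (t : CTree α) (v c : List ℕ) : Multiset (List ℕ) :=
  ((edgeS t).filter (fun d => v <+: d ∧ d ≠ v ∧ d <+: c)).val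

/-- The relation `A ∼ B` on multisets of edges: `A` and `B` consist exactly of the edges
of two non-self-crossing paths from a common vertex to two colored vertices. -/
def Sim (t : CTree α) (A B : Multiset (List ℕ)) : Prop :=
  ∃ v ∈ vertS t, ∃ c₁ ∈ colS t, ∃ c₂ ∈ colS t, v <+: c₁ ∧ v <+: c₂ ∧
    A = pathEdges t v c₁ ∧ B = pathEdges t v c₂

/-- `Y` is a minimally complete subset of the set of edges of `t`: every
(non-self-crossing) path from the root to a colored vertex contains exactly one edge
of `Y`. -/
def MinComplete (t : CTree α) (Y : Finset (List ℕ)) : Prop :=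
  Y ⊆ edgeS t ∧ ∀ c ∈ colS t, ∃! d, d ∈ Y ∧ d <+: c

/-- The finite set of minimally complete subsets of the edge set of `t`. -/
def MCfin (t : CTree α) : Finset (Finset (List ℕ)) :=
  (edgeS t).powerset.filter (fun Y => MinComplete t Y)

/-- The dual cone `C(Γ) = {x ∈ ℝ^g | ⟨w_d, x⟩ ≥ 0 for all edges d}`. -/
def dualCone (t : CTree α) : Set (List ℕ → ℝ) :=
  {x | (∀ p, p ∉ uncS t → x p = 0) ∧ ∀ d ∈ edgeS t, 0 ≤ pairR t (wt t d) x}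

/-- The ray spanned by a vector `v`. -/
def ray (v : List ℕ → ℝ) : Set (List ℕ → ℝ) := {x | ∃ c : ℝ, 0 ≤ c ∧ x = c • v}

/-- `F` is a one-dimensional face (extreme ray) of the convex cone `C`. -/
def IsOneDimFace (C F : Set (List ℕ → ℝ)) : Prop :=
  F ⊆ C ∧ (∃ v, v ≠ 0 ∧ F = ray v) ∧
    ∀ x ∈ C, ∀ y ∈ C, x + y ∈ F → x ∈ F ∧ y ∈ F

/-- The convex cone generated by a set `G ⊆ ℤ^g` inside `ℝ^g`: all finite nonnegative
real combinations of elements of `G`. -/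
def coneHull (G : Set (List ℕ → ℤ)) : Set (List ℕ → ℝ) :=
  {x | ∃ (F : Finset (List ℕ → ℤ)) (c : (List ℕ → ℤ) → ℝ),
    ↑F ⊆ G ∧ (∀ v ∈ F, 0 ≤ c v) ∧
    x = ∑ v ∈ F, c v • (fun p => ((v p : ℤ) : ℝ))}

/-- `e_{v_0} ∈ ℤ^g`: the basis vector of the root vertex. -/
def e0 : List ℕ → ℤ := fun p => if p = [] then 1 else 0

/-- The inclusion `ℤ^{g_i} → ℤ^g` corresponding to the `i`-th principal subtree. -/
def shift (i : ℕ) (f : List ℕ → ℤ) : List ℕ → ℤ := fun p =>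
  match p with
  | [] => 0
  | j :: q => if j = i then f q else 0

def isNodeB : CTree α → Bool
  | leaf _ => false
  | node _ => true

/-- The recursively defined set `G(Γ) ⊆ ℤ^g`: `G(Γ)` consists of all vectors
`e_{v₀} + ∑_{i ∈ J} (w_i - e_{v₀})` where `J` ranges over subsets of the set of indices
of non-trivial principal subtrees and `w_i ∈ G(Γ_i)` (in particular if `g = 1` this is
just `{e_{v₀}}`). -/
def Gset : CTree α → Set (List ℕ → ℤ)
  | leaf _ => ∅
  | node ts =>
      {v | ∃ (J : Finset (Fin ts.length)) (w : Fin ts.length → (List ℕ → ℤ)),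
        (∀ i ∈ J, (ts.get i).isNodeB = true ∧ w i ∈ Gset (ts.get i)) ∧
        v = e0 + ∑ i ∈ J, (shift i.1 (w i) - e0)}
  termination_by t => sizeOf t
  decreasing_by
    have h1 : ts.get i ∈ ts := List.get_mem ts i
    have h2 := List.sizeOf_lt_of_mem h1
    simp only [CTree.node.sizeOf_spec]
    omega

/-- Transport of a set of edges of `Γ` to the `i`-th principal subtree
(`Y ∩ E(Γ_i)`, rewritten in the coordinates of `Γ_i`). -/
def sect (i : ℕ) (Y : Finset (List ℕ)) : Finset (List ℕ) :=
  (Y.filter (fun p => p.head? = some i)).image List.tail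

/-- The recursively defined vector `v_Y ∈ ℤ^g` attached to a (minimally complete) set
of edges `Y`: `v_Y = e_{v₀} + ∑_{i ∈ I} (v_{Y_i} - e_{v₀})` where
`I = {i | d_i ∉ Y}` and `Y_i = Y ∩ E(Γ_i)` (if `g = 1` this is just `e_{v₀}`). -/
def vY : CTree α → Finset (List ℕ) → (List ℕ → ℤ)
  | leaf _, _ => 0
  | node ts, Y =>
      e0 + ∑ i ∈ Finset.univ.filter (fun i : Fin ts.length => [i.1] ∉ Y),
        (shift i.1 (vY (ts.get i) (sect i.1 Y)) - e0)
  termination_by t => sizeOf t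
  decreasing_by
    have h1 : ts.get i ∈ ts := List.get_mem ts i
    have h2 := List.sizeOf_lt_of_mem h1
    simp only [CTree.node.sizeOf_spec]
    omega

/-- The set of balanced labellings `X(Γ) ⊆ ℂ^{E(Γ)}`. -/
def Xbal (t : CTree α) : Set (List ℕ → ℂ) :=
  {x | ∀ v ∈ uncS t, ∀ c ∈ colS t, ∀ c' ∈ colS t, v <+: c → v <+: c' →
    ((pathEdges t v c).map x).prod = ((pathEdges t v c').map x).prod}

/-- `Y ⊆ E(Γ)` is complete: for every finite multiset `A` of edges, the monomial
`∏_{d ∈ A} x_d` vanishes identically on `{x ∈ X(Γ) | x_y = 0 ∀ y ∈ Y}` if and only if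
`A` contains at least one edge belonging to `Y`. -/
def CompleteSet (t : CTree α) (Y : Finset (List ℕ)) : Prop :=
  ∀ A : Multiset (List ℕ), (∀ d ∈ A, d ∈ edgeS t) →
    ((∀ x ∈ Xbal t, (∀ y ∈ Y, x y = 0) → (A.map x).prod = 0) ↔ ∃ d ∈ A, d ∈ Y)

/-- A partition of a type `I`: a finite collection of nonempty pairwise disjoint
subsets covering `I`. -/
def IsPart {I : Type} (P : Finset (Finset I)) : Prop :=
  (∀ S ∈ P, S ≠ ∅) ∧ ∀ a : I, ∃! S, S ∈ P ∧ a ∈ S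

/-- The tree with a single uncolored vertex whose children are the colored vertices
labelled by the elements of `S`. -/
def blockTree {I : Type} (S : Finset I) : CTree I := node (S.toList.map leaf)

/-- The colored tree `Γ_P` of a partition `P`: the root has one child for each block
`S ∈ P`, an uncolored vertex whose children are colored vertices labelled by the
elements of `S`. -/
def gammaP {I : Type} (P : Finset (Finset I)) : CTree I := node (P.toList.map blockTree)

/-- A tree homomorphism `t → t'`, described by a map `f` on vertex positions: it sends
root to root, vertices to vertices, the two endpoints of any edge to the two endpoints
of an edge, and restricts to a label-preserving bijection between the colored
vertices. -/
def TreeHom {I : Type} (t t' : CTree I) (f : List ℕ → List ℕ) : Prop :=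
  f [] = [] ∧
  (∀ p ∈ vertS t, f p ∈ vertS t') ∧
  (∀ p ∈ vertS t, p ≠ [] →
    (f p ≠ [] ∧ (f p).dropLast = f p.dropLast) ∨
    (f p.dropLast ≠ [] ∧ (f p.dropLast).dropLast = f p)) ∧
  (∀ p a, t.sub p = some (leaf a) → t'.sub (f p) = some (leaf a)) ∧
  Set.BijOn f {p | ∃ a, t.sub p = some (leaf a)} {q | ∃ a, t'.sub q = some (leaf a)}

/-- A partition `P` of the label set is compatible with the colored tree `t` if there
exists a tree homomorphism `t → Γ_P`. -/
def Compatible {I : Type} (t : CTree I) (P : Finset (Finset I)) : Prop :=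
  ∃ f, TreeHom t (gammaP P) f

/-- `C_y ⊆ I` : the labels of the colored vertices whose path from the root contains
the edge `y`. -/
def Cy {I : Type} [Fintype I] [DecidableEq I] (t : CTree I) (y : List ℕ) : Finset I :=
  Finset.univ.filter (fun a => ∃ p, t.sub p = some (leaf a) ∧ y <+: p)

end CTree

/-- The variables of the polynomial ring: one for each edge of `t`. -/
def EdgeVar {α : Type} (t : CTree α) : Type := {d : List ℕ // d ∈ CTree.edgeS t}

/-- The `ℂ`-algebra homomorphism `φ : ℂ[x_d : d ∈ E(Γ)] → ℂ[M]`, `x_d ↦ t^{w_d}`. -/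
def toricHom {α : Type} (t : CTree α) :
    MvPolynomial (EdgeVar t) ℂ →ₐ[ℂ] AddMonoidAlgebra ℂ (List ℕ → ℤ) :=
  MvPolynomial.aeval (fun d => AddMonoidAlgebra.single (CTree.wt t d.1) (1 : ℂ))

/-- The ideal generated by the binomials `∏_{d ∈ A} x_d - ∏_{d ∈ B} x_d` over all pairs
of disjoint finite multisets of edges with `A ∼ B`. -/
def simIdeal {α : Type} (t : CTree α) : Ideal (MvPolynomial (EdgeVar t) ℂ) :=
  Ideal.span {f | ∃ A B : Multiset (EdgeVar t),
    Disjoint A B ∧ CTree.Sim t (A.map Subtype.val) (B.map Subtype.val) ∧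
    f = (A.map MvPolynomial.X).prod - (B.map MvPolynomial.X).prod}

/-!
The kernel of a monomial map `x_d ↦ t^{w_d}` is spanned by the binomials `x^A - x^B` whose
monomials have the same weight, so it suffices to show that each such binomial lies in the ideal
of `∼`. Evaluated at an uncolored vertex `u`, the weight of `A` minus its value at the parent of
`u` is the net flow of `A` at `u` (edges of `A` leaving `u` minus edges entering `u`); hence `A`
and `B` have the same weight iff they have the same net flows. If `A` and `B` share no edge, an
edge of `A` of minimal depth leaves a vertex `v` that no edge of `A` enters, so `B` also leaves
`v`; balance of the flows lets one follow edges of `A`, resp. `B`, down to colored vertices.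
This yields two disjoint paths from `v`, one in `A` and one in `B`, whose binomial is a generator,
and removing them gives a smaller pair. Conversely, the weight of a path from `v` to a colored
vertex is `s_v`, so every generator lies in the kernel.
-/

theorem Multiset.natCast_countP_eq_sum_map {β R : Type*} [AddCommMonoidWithOne R]
    (p : β → Prop) [DecidablePred p] (A : Multiset β) :
    (A.countP p : R) = (A.map fun a => if p a then 1 else 0).sum := by
  induction A using Multiset.induction with
  | empty => simp
  | cons a A ih => by_cases h : p a <;> simp [h, ih, add_comm]

section MonomialMap

open MvPolynomial

variable {σ R G : Type*} [CommRing R] [AddCommMonoid G] (w : σ → G)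

theorem MvPolynomial.monomial_one_eq_prod_map_X (m : σ →₀ ℕ) :
    monomial m (1 : R) = ((Finsupp.toMultiset m).map X).prod := by
  rw [Finsupp.toMultiset_map, Finsupp.prod_toMultiset,
    Finsupp.prod_mapDomain_index (fun _ => pow_zero _) (fun _ _ _ => pow_add _ _ _),
    monomial_eq, C_1, one_mul]

theorem MvPolynomial.aeval_single_prod_map_X (A : Multiset σ) :
    aeval (fun i => AddMonoidAlgebra.single (w i) (1 : R)) ((A.map X).prod : MvPolynomial σ R) =
      AddMonoidAlgebra.single (A.map w).sum 1 := by
  induction A using Multiset.induction with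
  | empty => simp only [Multiset.map_zero, Multiset.prod_zero, map_one, Multiset.sum_zero]; rfl
  | cons i A ih => simp [ih, AddMonoidAlgebra.single_mul_single]

theorem MvPolynomial.aeval_single_monomial (m : σ →₀ ℕ) (c : R) :
    aeval (fun i => AddMonoidAlgebra.single (w i) (1 : R)) (monomial m c) =
      AddMonoidAlgebra.single ((Finsupp.toMultiset m).map w).sum c := by
  rw [← mul_one c, ← smul_eq_mul, ← smul_monomial, map_smul, monomial_one_eq_prod_map_X,
    aeval_single_prod_map_X, AddMonoidAlgebra.smul_single]

/-- A polynomial in the kernel is congruent, monomial by monomial, to a combination of chosen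
representatives of the weight classes; that combination vanishes because its coefficients are
the coefficients of the image. -/
theorem MvPolynomial.ker_aeval_single_le {I : Ideal (MvPolynomial σ R)}
    (hI : ∀ A B : Multiset σ, (A.map w).sum = (B.map w).sum →
      (A.map X).prod - (B.map X).prod ∈ I) :
    RingHom.ker (aeval fun i => AddMonoidAlgebra.single (w i) (1 : R)) ≤ I := by
  intro p hp
  set weight : (σ →₀ ℕ) → G := fun m => ((Finsupp.toMultiset m).map w).sum
  set rep := Function.invFun weight
  have hweight_rep : ∀ m, weight (rep (weight m)) = weight m :=
    fun m => Function.invFun_eq ⟨m, rfl⟩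
  have hfiber : ∀ μ, ∑ m ∈ p.support with weight m = μ, coeff m p = 0 := by
    intro μ
    have h := congrArg (fun x => x.coeff μ) (RingHom.mem_ker.mp hp)
    rw [p.as_sum, map_sum] at h
    simpa [aeval_single_monomial, AddMonoidAlgebra.coeff_sum, AddMonoidAlgebra.coeff_single,
      Finsupp.single_apply, Finset.sum_filter] using h
  have hrep_sum : ∑ m ∈ p.support, monomial (rep (weight m)) (coeff m p) = 0 := by
    rw [← Finset.sum_fiberwise_of_maps_to (fun m hm => Finset.mem_image_of_mem weight hm)]
    refine Finset.sum_eq_zero fun μ _ => ?_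
    rw [Finset.sum_congr rfl fun m hm => by rw [(Finset.mem_filter.mp hm).2], ← map_sum,
      hfiber, map_zero]
  have hp_eq : p = ∑ m ∈ p.support,
      C (coeff m p) * (monomial m 1 - monomial (rep (weight m)) 1) := by
    conv_lhs => rw [p.as_sum, ← sub_zero (∑ m ∈ p.support, _), ← hrep_sum]
    simp only [← Finset.sum_sub_distrib, mul_sub, C_mul_monomial, mul_one]
  rw [hp_eq]
  refine I.sum_mem fun m _ => I.mul_mem_left _ ?_
  rw [monomial_one_eq_prod_map_X, monomial_one_eq_prod_map_X]
  exact hI _ _ (hweight_rep m).symm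

end MonomialMap

theorem List.length_lt_sizeOf {β : Type*} [SizeOf β] (l : List β) : l.length < sizeOf l := by
  induction l with
  | nil => simp
  | cons a l ih => simp only [List.length_cons, List.cons.sizeOf_spec]; omega

theorem List.length_dropLast_lt {β : Type*} {l : List β} (hl : l ≠ []) :
    l.dropLast.length < l.length := by
  rw [List.length_dropLast]
  have := List.length_pos_iff.mpr hl
  omega

theorem List.prefix_iff_eq_or_prefix_dropLast {β : Type*} {x u : List β} (hu : u ≠ []) :
    x <+: u ↔ x = u ∨ x <+: u.dropLast := by
  conv_lhs => rw [← List.dropLast_append_getLast hu]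
  rw [List.prefix_concat_iff, List.dropLast_append_getLast hu]

theorem List.prefix_of_dropLast_prefix {β : Type*} {d e c : List β} (hde : d.dropLast <+: e)
    (hne : e ≠ d.dropLast) (hdc : d <+: c) (hec : e <+: c) : d <+: e := by
  refine List.prefix_of_prefix_length_le hdc hec ?_
  have hlt : d.dropLast.length < e.length :=
    lt_of_le_of_ne hde.length_le fun h => hne (hde.eq_of_length h).symm
  rw [List.length_dropLast] at hlt
  omega

namespace CTree

variable {α : Type} {t : CTree α}

theorem sub_append (t : CTree α) (p q : List ℕ) :
    t.sub (p ++ q) = (t.sub p).bind (·.sub q) := by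
  induction p generalizing t with
  | nil => simp [sub]
  | cons i p ih =>
    cases t with
    | leaf a => simp [sub]
    | node ts =>
      simp only [List.cons_append, sub]
      cases ts[i]? <;> simp [ih]

theorem bounds_of_sub_eq_some : ∀ {p : List ℕ} {t s : CTree α}, t.sub p = some s →
    p.length + sizeOf s ≤ sizeOf t ∧ ∀ i ∈ p, i < sizeOf t
  | [], t, s, h => by simp only [sub, Option.some.injEq] at h; subst h; simp
  | _ :: _, leaf _, _, h => by simp [sub] at h
  | i :: p, node ts, s, h => by
    simp only [sub] at h
    cases hc : ts[i]? with
    | none => simp [hc] at h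
    | some c =>
      rw [hc] at h
      obtain ⟨hi, rfl⟩ := List.getElem?_eq_some_iff.mp hc
      have hc_lt := List.sizeOf_lt_of_mem (List.getElem_mem hi)
      have hlen := List.length_lt_sizeOf ts
      obtain ⟨h₁, h₂⟩ := bounds_of_sub_eq_some h
      simp only [List.length_cons, node.sizeOf_spec, List.mem_cons, forall_eq_or_imp]
      exact ⟨by omega, by omega, fun j hj => by have := h₂ j hj; omega⟩

theorem mem_allLists {m : ℕ} : ∀ {k : ℕ} {p : List ℕ},
    p ∈ allLists m k ↔ p.length ≤ k ∧ ∀ i ∈ p, i < m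
  | 0, p => by
    simp only [allLists, List.mem_singleton, Nat.le_zero, List.length_eq_zero_iff]
    exact ⟨fun h => ⟨h, by simp [h]⟩, And.left⟩
  | k + 1, [] => by simp [allLists]
  | k + 1, i :: p => by simp [allLists, mem_allLists, and_assoc, and_comm, and_left_comm]

theorem mem_allLists_of_sub_eq_some {p : List ℕ} {s : CTree α} (h : t.sub p = some s) :
    p ∈ (allLists (sizeOf t) (sizeOf t)).toFinset := by
  obtain ⟨h₁, h₂⟩ := bounds_of_sub_eq_some h
  rw [List.mem_toFinset, mem_allLists]
  exact ⟨by omega, h₂⟩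

theorem mem_vertS {p : List ℕ} : p ∈ vertS t ↔ ∃ s, t.sub p = some s := by
  simp only [vertS, Finset.mem_filter, Option.isSome_iff_exists, and_iff_right_iff_imp]
  exact fun ⟨_, h⟩ => mem_allLists_of_sub_eq_some h

theorem mem_uncS {p : List ℕ} : p ∈ uncS t ↔ ∃ ts, t.sub p = some (node ts) := by
  simp only [uncS, Finset.mem_filter, and_iff_right_iff_imp]
  exact fun ⟨_, h⟩ => mem_allLists_of_sub_eq_some h

theorem mem_colS {p : List ℕ} : p ∈ colS t ↔ ∃ a, t.sub p = some (leaf a) := by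
  simp only [colS, Finset.mem_filter, and_iff_right_iff_imp]
  exact fun ⟨_, h⟩ => mem_allLists_of_sub_eq_some h

theorem length_lt_sizeOf_of_mem_vertS {p : List ℕ} (hp : p ∈ vertS t) : p.length < sizeOf t := by
  obtain ⟨s, hs⟩ := mem_vertS.mp hp
  have := (bounds_of_sub_eq_some hs).1
  cases s <;> simp only [leaf.sizeOf_spec, node.sizeOf_spec] at this <;> omega

theorem mem_vertS_of_prefix {p q : List ℕ} (hqp : q <+: p) (hp : p ∈ vertS t) : q ∈ vertS t := by
  obtain ⟨r, rfl⟩ := hqp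
  obtain ⟨s, hs⟩ := mem_vertS.mp hp
  rw [sub_append] at hs
  cases hq : t.sub q <;> simp_all [mem_vertS]

theorem mem_uncS_or_mem_colS {p : List ℕ} (hp : p ∈ vertS t) : p ∈ uncS t ∨ p ∈ colS t := by
  obtain ⟨s, hs⟩ := mem_vertS.mp hp
  cases s with
  | leaf a => exact Or.inr (mem_colS.mpr ⟨a, hs⟩)
  | node ts => exact Or.inl (mem_uncS.mpr ⟨ts, hs⟩)

theorem mem_vertS_of_mem_uncS {p : List ℕ} (hp : p ∈ uncS t) : p ∈ vertS t := by
  obtain ⟨ts, h⟩ := mem_uncS.mp hp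
  exact mem_vertS.mpr ⟨_, h⟩

theorem mem_vertS_of_mem_colS {p : List ℕ} (hp : p ∈ colS t) : p ∈ vertS t := by
  obtain ⟨a, h⟩ := mem_colS.mp hp
  exact mem_vertS.mpr ⟨_, h⟩

theorem dropLast_mem_uncS {p : List ℕ} (hp : p ∈ vertS t) (hp0 : p ≠ []) :
    p.dropLast ∈ uncS t := by
  obtain ⟨s, hs⟩ := mem_vertS.mp hp
  rw [← List.dropLast_append_getLast hp0, sub_append] at hs
  cases hq : t.sub p.dropLast with
  | none => simp [hq] at hs
  | some s' =>
    cases s' with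
    | leaf a => simp [hq, sub] at hs
    | node ts => exact mem_uncS.mpr ⟨ts, hq⟩

theorem not_prefix_of_mem_colS {c u : List ℕ} (hc : c ∈ colS t) (hu : u ∈ uncS t) : ¬ c <+: u := by
  rintro ⟨r, rfl⟩
  obtain ⟨a, ha⟩ := mem_colS.mp hc
  obtain ⟨ts, hts⟩ := mem_uncS.mp hu
  rw [sub_append, ha] at hts
  cases r <;> simp [sub] at hts

theorem mem_edgeS {d : List ℕ} : d ∈ edgeS t ↔ d ≠ [] ∧ d ∈ vertS t := Finset.mem_erase

instance (t : CTree α) : Fintype (EdgeVar t) := inferInstanceAs (Fintype {d // d ∈ edgeS t})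

def pathVars (t : CTree α) (v c : List ℕ) : Multiset (EdgeVar t) :=
  (Finset.univ.filter fun e : EdgeVar t => v <+: e.1 ∧ e.1 ≠ v ∧ e.1 <+: c).val

theorem mem_pathVars {v c : List ℕ} {e : EdgeVar t} :
    e ∈ pathVars t v c ↔ v <+: e.1 ∧ e.1 ≠ v ∧ e.1 <+: c := by
  simp [pathVars]

theorem nodup_pathVars (v c : List ℕ) : (pathVars t v c).Nodup := Finset.nodup _

theorem pathVars_map_val (v c : List ℕ) :
    (pathVars t v c).map Subtype.val = pathEdges t v c := by
  refine (Multiset.Nodup.ext ((nodup_pathVars v c).map Subtype.val_injective)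
    (Finset.nodup _)).mpr fun d => Multiset.mem_map.trans ?_
  simp only [Finset.mem_val, Finset.mem_filter]
  exact ⟨fun ⟨e, he, hed⟩ => hed ▸ ⟨e.2, mem_pathVars.mp he⟩,
    fun ⟨hd, h⟩ => ⟨⟨d, hd⟩, mem_pathVars.mpr h, rfl⟩⟩

theorem pathVars_self (c : List ℕ) : pathVars t c c = 0 :=
  Multiset.eq_zero_of_forall_notMem fun _ he =>
    let ⟨h₁, h₂, h₃⟩ := mem_pathVars.mp he
    h₂ (h₃.eq_of_length_le h₁.length_le)

theorem pathVars_dropLast_eq_cons {c : List ℕ} (e : EdgeVar t) (hec : e.1 <+: c) :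
    pathVars t e.1.dropLast c = e ::ₘ pathVars t e.1 c := by
  have hlen := List.length_dropLast_lt (mem_edgeS.mp e.2).1
  refine (Multiset.Nodup.ext (nodup_pathVars _ _)
    (Multiset.nodup_cons.mpr ⟨fun h => (mem_pathVars.mp h).2.1 rfl, nodup_pathVars _ _⟩)).mpr
    fun f => ?_
  rw [Multiset.mem_cons, mem_pathVars, mem_pathVars]
  constructor
  · rintro ⟨h₁, h₂, h₃⟩
    by_cases hfe : f = e
    · exact Or.inl hfe
    · exact Or.inr ⟨List.prefix_of_dropLast_prefix h₁ h₂ hec h₃, fun h => hfe (Subtype.ext h), h₃⟩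
  · rintro (rfl | ⟨h₁, -, h₃⟩)
    · exact ⟨List.dropLast_prefix _, fun h => hlen.ne' (congrArg List.length h), hec⟩
    · refine ⟨(List.dropLast_prefix _).trans h₁, fun h => ?_, h₃⟩
      have := h₁.length_le
      rw [h] at this
      omega

def weightSum (t : CTree α) (A : Multiset (EdgeVar t)) : List ℕ → ℤ :=
  (A.map fun d => wt t d.1).sum

@[simp]
theorem weightSum_zero : weightSum t 0 = 0 := by simp [weightSum]

@[simp]
theorem weightSum_add (A B : Multiset (EdgeVar t)) :
    weightSum t (A + B) = weightSum t A + weightSum t B := by simp [weightSum]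

@[simp]
theorem weightSum_cons (e : EdgeVar t) (A : Multiset (EdgeVar t)) :
    weightSum t (e ::ₘ A) = wt t e.1 + weightSum t A := by simp [weightSum]

theorem weightSum_apply (A : Multiset (EdgeVar t)) (u : List ℕ) :
    weightSum t A u = (A.map fun d => wt t d.1 u).sum := by
  rw [weightSum, Pi.multiset_sum_apply, Multiset.map_map]
  rfl

theorem wt_eq_sv_sub_sv (d : List ℕ) : wt t d = sv t d.dropLast - sv t d := by
  funext u
  have hdrop : d <+: u → d.dropLast <+: u := (List.dropLast_prefix d).trans
  by_cases hu : u ∈ uncS t <;> by_cases h₁ : d <+: u <;> by_cases h₂ : d.dropLast <+: u <;>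
    simp_all [wt, sv]

theorem sv_eq_zero_of_mem_colS {c : List ℕ} (hc : c ∈ colS t) : sv t c = 0 := by
  funext u
  simp only [sv, Pi.zero_apply, ite_eq_right_iff]
  exact fun ⟨hu, hcu⟩ => absurd hcu (not_prefix_of_mem_colS hc hu)

theorem weightSum_pathVars : ∀ (r v : List ℕ), v ++ r ∈ vertS t →
    weightSum t (pathVars t v (v ++ r)) = sv t v - sv t (v ++ r)
  | [], v, _ => by simp [pathVars_self]
  | x :: r, v, hc => by
    have hvx : v ++ [x] <+: v ++ x :: r := ⟨r, by simp⟩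
    obtain ⟨e, he⟩ : ∃ e : EdgeVar t, e.1 = v ++ [x] :=
      ⟨⟨_, mem_edgeS.mpr ⟨by simp, mem_vertS_of_prefix hvx hc⟩⟩, rfl⟩
    have hsplit := pathVars_dropLast_eq_cons e (he ▸ hvx)
    have ih := weightSum_pathVars r (v ++ [x]) (by simpa using hc)
    simp only [he, List.dropLast_concat, List.append_assoc, List.cons_append,
      List.nil_append] at hsplit ih
    rw [hsplit, weightSum_cons, ih, wt_eq_sv_sub_sv, he, List.dropLast_concat]
    abel

theorem weightSum_pathVars_of_mem_colS {v c : List ℕ} (hc : c ∈ colS t) (hvc : v <+: c) :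
    weightSum t (pathVars t v c) = sv t v := by
  obtain ⟨r, rfl⟩ := hvc
  rw [weightSum_pathVars r v (mem_vertS_of_mem_colS hc), sv_eq_zero_of_mem_colS hc, sub_zero]

theorem sv_sub_sv_dropLast (x : List ℕ) {u : List ℕ} (hu : u ∈ uncS t) (hu0 : u ≠ []) :
    sv t x u - sv t x u.dropLast = if x = u then 1 else 0 := by
  have hu' : u.dropLast ∈ uncS t := dropLast_mem_uncS (mem_vertS_of_mem_uncS hu) hu0
  have hlen := List.length_dropLast_lt hu0
  have hexcl : x = u → ¬ x <+: u.dropLast := by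
    rintro rfl h
    exact absurd h.length_le (not_le.mpr hlen)
  simp only [sv, hu, hu', true_and, List.prefix_iff_eq_or_prefix_dropLast hu0]
  by_cases hxu : x = u <;> by_cases hx : x <+: u.dropLast <;> simp_all

theorem sv_nil (x : List ℕ) (h : [] ∈ uncS t) : sv t x [] = if x = [] then 1 else 0 := by
  simp [sv, h]

/-- Since an edge is identified with its lower endpoint, this is the number of edges of `A`
leaving `u` minus the number of edges of `A` entering `u`. -/
def netFlow (t : CTree α) (A : Multiset (EdgeVar t)) (u : List ℕ) : ℤ :=
  (A.countP fun d => d.1.dropLast = u : ℤ) - A.countP fun d => d.1 = u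

theorem netFlow_eq_sum (A : Multiset (EdgeVar t)) (u : List ℕ) :
    netFlow t A u =
      (A.map fun d => (if d.1.dropLast = u then 1 else 0) - if d.1 = u then 1 else 0).sum := by
  rw [netFlow, Multiset.natCast_countP_eq_sum_map, Multiset.natCast_countP_eq_sum_map,
    Multiset.sum_map_sub]

theorem netFlow_eq_weightSum_sub (A : Multiset (EdgeVar t)) {u : List ℕ} (hu : u ∈ uncS t)
    (hu0 : u ≠ []) : netFlow t A u = weightSum t A u - weightSum t A u.dropLast := by
  rw [netFlow_eq_sum, weightSum_apply, weightSum_apply, ← Multiset.sum_map_sub]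
  refine congrArg _ (Multiset.map_congr rfl fun d _ => ?_)
  simp only [wt_eq_sv_sub_sv, Pi.sub_apply]
  linarith [sv_sub_sv_dropLast d.1.dropLast hu hu0, sv_sub_sv_dropLast d.1 hu hu0]

theorem netFlow_nil (A : Multiset (EdgeVar t)) (h : [] ∈ uncS t) :
    netFlow t A [] = weightSum t A [] := by
  rw [netFlow_eq_sum, weightSum_apply]
  refine congrArg _ (Multiset.map_congr rfl fun d _ => ?_)
  simp only [wt_eq_sv_sub_sv, Pi.sub_apply, sv_nil _ h]

theorem netFlow_eq_of_weightSum_eq {A B : Multiset (EdgeVar t)}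
    (h : weightSum t A = weightSum t B) {u : List ℕ} (hu : u ∈ uncS t) :
    netFlow t A u = netFlow t B u := by
  rcases eq_or_ne u [] with rfl | hu0
  · rw [netFlow_nil A hu, netFlow_nil B hu, h]
  · rw [netFlow_eq_weightSum_sub A hu hu0, netFlow_eq_weightSum_sub B hu hu0, h]

theorem exists_dropLast_eq_of_netFlow_pos {A : Multiset (EdgeVar t)} {u : List ℕ}
    (h : 0 < netFlow t A u) : ∃ e ∈ A, e.1.dropLast = u := by
  rw [← Multiset.countP_pos]
  unfold netFlow at h
  omega

theorem netFlow_dropLast_pos {A : Multiset (EdgeVar t)} {d : EdgeVar t} (hd : d ∈ A)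
    (hmin : ∀ e ∈ A, d.1.length ≤ e.1.length) : 0 < netFlow t A d.1.dropLast := by
  have hlen := List.length_dropLast_lt (mem_edgeS.mp d.2).1
  have hout : 0 < A.countP fun e => e.1.dropLast = d.1.dropLast :=
    Multiset.countP_pos.mpr ⟨d, hd, rfl⟩
  have hin : A.countP (fun e => e.1 = d.1.dropLast) = 0 :=
    Multiset.countP_eq_zero.mpr fun e he hed => by have := hmin e he; rw [hed] at this; omega
  unfold netFlow
  omega

theorem exists_dropLast_eq_of_netFlow_eq {A B : Multiset (EdgeVar t)} {e : EdgeVar t}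
    (he : e ∈ A) (heB : e ∉ B) (h : netFlow t A e.1 = netFlow t B e.1) :
    ∃ e' ∈ A, e'.1.dropLast = e.1 := by
  have hin : 0 < A.countP fun d => d.1 = e.1 := Multiset.countP_pos.mpr ⟨e, he, rfl⟩
  have hinB : B.countP (fun d => d.1 = e.1) = 0 :=
    Multiset.countP_eq_zero.mpr fun d hd hde => heB (Subtype.ext hde ▸ hd)
  rw [← Multiset.countP_pos]
  unfold netFlow at h
  omega

theorem exists_pathVars_subset {A : Multiset (EdgeVar t)}
    (hA : ∀ e ∈ A, e.1 ∈ uncS t → ∃ e' ∈ A, e'.1.dropLast = e.1) {e : EdgeVar t} (he : e ∈ A) :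
    ∃ c ∈ colS t, e.1 <+: c ∧ pathVars t e.1.dropLast c ⊆ A := by
  induction hn : sizeOf t - e.1.length using Nat.strong_induction_on generalizing e with
  | _ n ih =>
  rcases mem_uncS_or_mem_colS (mem_edgeS.mp e.2).2 with hu | hc
  · obtain ⟨e', he', hdrop⟩ := hA e he hu
    have hee' : e.1 <+: e'.1 := hdrop ▸ List.dropLast_prefix e'.1
    have hlen : e.1.length < e'.1.length := hdrop ▸ List.length_dropLast_lt (mem_edgeS.mp e'.2).1
    have := length_lt_sizeOf_of_mem_vertS (mem_edgeS.mp e'.2).2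
    obtain ⟨c, hc, he'c, hsub⟩ := ih _ (by omega) he' rfl
    rw [hdrop] at hsub
    refine ⟨c, hc, hee'.trans he'c, ?_⟩
    rw [pathVars_dropLast_eq_cons e (hee'.trans he'c)]
    exact Multiset.cons_subset.mpr ⟨he, hsub⟩
  · refine ⟨e.1, hc, List.prefix_refl _, ?_⟩
    rw [pathVars_dropLast_eq_cons e (List.prefix_refl _), pathVars_self]
    simpa using he

theorem disjoint_pathVars {d d' : EdgeVar t} (hdd' : d ≠ d')
    (hdrop : d'.1.dropLast = d.1.dropLast) {c₁ c₂ : List ℕ} (h₁ : d.1 <+: c₁) (h₂ : d'.1 <+: c₂) :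
    Disjoint (pathVars t d.1.dropLast c₁) (pathVars t d.1.dropLast c₂) := by
  have hprefix : ∀ {d : EdgeVar t} {c : List ℕ}, d.1 <+: c → ∀ e ∈ pathVars t d.1.dropLast c,
      d.1 <+: e.1 := fun {d} {c} h e he => by
    rw [pathVars_dropLast_eq_cons d h, Multiset.mem_cons, mem_pathVars] at he
    exact he.elim (fun h => h ▸ List.prefix_refl _) (·.1)
  have hlen : d.1.length = d'.1.length := by
    have := congrArg List.length hdrop
    have := List.length_pos_iff.mpr (mem_edgeS.mp d.2).1
    have := List.length_pos_iff.mpr (mem_edgeS.mp d'.2).1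
    simp only [List.length_dropLast] at *
    omega
  refine Multiset.disjoint_left.mpr fun {e} he₁ he₂ => hdd' (Subtype.ext ?_)
  have hd := hprefix h₁ e he₁
  have hd' := hprefix h₂ e (hdrop ▸ he₂)
  exact (List.prefix_of_prefix_length_le hd hd' hlen.le).eq_of_length hlen

def quotMonomial (t : CTree α) (A : Multiset (EdgeVar t)) :
    MvPolynomial (EdgeVar t) ℂ ⧸ simIdeal t :=
  Ideal.Quotient.mk (simIdeal t) (A.map MvPolynomial.X).prod

theorem quotMonomial_add (A B : Multiset (EdgeVar t)) :
    quotMonomial t (A + B) = quotMonomial t A * quotMonomial t B := by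
  simp [quotMonomial]

theorem quotMonomial_pathVars_eq {v c₁ c₂ : List ℕ} (hv : v ∈ vertS t) (hc₁ : c₁ ∈ colS t)
    (hc₂ : c₂ ∈ colS t) (h₁ : v <+: c₁) (h₂ : v <+: c₂)
    (hdisj : Disjoint (pathVars t v c₁) (pathVars t v c₂)) :
    quotMonomial t (pathVars t v c₁) = quotMonomial t (pathVars t v c₂) :=
  Ideal.Quotient.eq.mpr <| Ideal.subset_span ⟨_, _, hdisj,
    ⟨v, hv, c₁, hc₁, c₂, hc₂, h₁, h₂, pathVars_map_val v c₁, pathVars_map_val v c₂⟩, rfl⟩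

theorem exists_exchange_of_disjoint {A B : Multiset (EdgeVar t)} (hAB : Disjoint A B)
    (hnet : ∀ u ∈ uncS t, netFlow t A u = netFlow t B u) (hA : A ≠ 0) :
    ∃ p₁ ≤ A, ∃ p₂ ≤ B, p₁ ≠ 0 ∧ weightSum t p₁ = weightSum t p₂ ∧
      quotMonomial t p₁ = quotMonomial t p₂ := by
  obtain ⟨d, hd, hmin⟩ := A.toFinset.exists_min_image (fun e => e.1.length)
    (Multiset.toFinset_nonempty.mpr hA)
  rw [Multiset.mem_toFinset] at hd
  set v := d.1.dropLast
  have hv : v ∈ uncS t := dropLast_mem_uncS (mem_edgeS.mp d.2).2 (mem_edgeS.mp d.2).1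
  obtain ⟨d', hd', hdrop⟩ := exists_dropLast_eq_of_netFlow_pos <|
    hnet v hv ▸ netFlow_dropLast_pos hd fun e he => hmin e (Multiset.mem_toFinset.mpr he)
  have hfollow : ∀ {C D : Multiset (EdgeVar t)}, Disjoint C D →
      (∀ u ∈ uncS t, netFlow t C u = netFlow t D u) →
      ∀ e ∈ C, e.1 ∈ uncS t → ∃ e' ∈ C, e'.1.dropLast = e.1 := fun hCD hCD' e he hu =>
    exists_dropLast_eq_of_netFlow_eq he (Multiset.disjoint_left.mp hCD he) (hCD' _ hu)
  obtain ⟨c₁, hc₁, hdc₁, hsub₁⟩ := exists_pathVars_subset (hfollow hAB hnet) hd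
  obtain ⟨c₂, hc₂, hdc₂, hsub₂⟩ :=
    exists_pathVars_subset (hfollow hAB.symm fun u hu => (hnet u hu).symm) hd'
  rw [hdrop] at hsub₂
  have hv₁ : v <+: c₁ := (List.dropLast_prefix _).trans hdc₁
  have hv₂ : v <+: c₂ := hdrop ▸ (List.dropLast_prefix _).trans hdc₂
  refine ⟨_, (Multiset.le_iff_subset (nodup_pathVars _ _)).mpr hsub₁,
    _, (Multiset.le_iff_subset (nodup_pathVars _ _)).mpr hsub₂, ?_, ?_, ?_⟩
  · rw [pathVars_dropLast_eq_cons d hdc₁]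
    exact Multiset.cons_ne_zero
  · rw [weightSum_pathVars_of_mem_colS hc₁ hv₁, weightSum_pathVars_of_mem_colS hc₂ hv₂]
  · have hdd' : d ≠ d' := fun h => Multiset.disjoint_left.mp hAB hd (h ▸ hd')
    exact quotMonomial_pathVars_eq (mem_vertS_of_mem_uncS hv) hc₁ hc₂ hv₁ hv₂
      (disjoint_pathVars hdd' hdrop hdc₁ hdc₂)

theorem exists_exchange {A B : Multiset (EdgeVar t)} (h : weightSum t A = weightSum t B)
    (h0 : A + B ≠ 0) :
    ∃ p₁ ≤ A, ∃ p₂ ≤ B, p₁ + p₂ ≠ 0 ∧ weightSum t p₁ = weightSum t p₂ ∧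
      quotMonomial t p₁ = quotMonomial t p₂ := by
  by_cases hcommon : ∃ e, e ∈ A ∧ e ∈ B
  · obtain ⟨e, heA, heB⟩ := hcommon
    exact ⟨{e}, Multiset.singleton_le.mpr heA, {e}, Multiset.singleton_le.mpr heB, by simp, rfl,
      rfl⟩
  have hAB : Disjoint A B := Multiset.disjoint_left.mpr fun ha hb => hcommon ⟨_, ha, hb⟩
  have hnet : ∀ u ∈ uncS t, netFlow t A u = netFlow t B u :=
    fun u hu => netFlow_eq_of_weightSum_eq h hu
  rcases eq_or_ne A 0 with rfl | hA
  · obtain ⟨p₂, hp₂, p₁, hp₁, hp, hw, hq⟩ :=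
      exists_exchange_of_disjoint hAB.symm (fun u hu => (hnet u hu).symm) (by simpa using h0)
    exact ⟨p₁, hp₁, p₂, hp₂, by simp [hp], hw.symm, hq.symm⟩
  · obtain ⟨p₁, hp₁, p₂, hp₂, hp, hw, hq⟩ := exists_exchange_of_disjoint hAB hnet hA
    exact ⟨p₁, hp₁, p₂, hp₂, by simp [hp], hw, hq⟩

theorem quotMonomial_eq_of_weightSum_eq {A B : Multiset (EdgeVar t)}
    (h : weightSum t A = weightSum t B) : quotMonomial t A = quotMonomial t B := by
  induction hn : Multiset.card (A + B) using Nat.strong_induction_on generalizing A B with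
  | _ n ih =>
  rcases eq_or_ne (A + B) 0 with h0 | h0
  · obtain ⟨rfl, rfl⟩ := add_eq_zero.mp h0
    rfl
  obtain ⟨p₁, hp₁, p₂, hp₂, hp, hw, hq⟩ := exists_exchange h h0
  obtain ⟨A', rfl⟩ := Multiset.le_iff_exists_add.mp hp₁
  obtain ⟨B', rfl⟩ := Multiset.le_iff_exists_add.mp hp₂
  have hw' : weightSum t A' = weightSum t B' := by
    rw [weightSum_add, weightSum_add, hw] at h
    exact add_left_cancel h
  have hcard : Multiset.card (A' + B') < n := by
    have := Multiset.card_pos.mpr hp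
    rw [← hn]
    simp only [Multiset.card_add] at this ⊢
    omega
  rw [quotMonomial_add, quotMonomial_add, hq, ih _ hcard hw' rfl]

theorem toricHom_prod_map_X (A : Multiset (EdgeVar t)) :
    toricHom t (A.map MvPolynomial.X).prod = AddMonoidAlgebra.single (weightSum t A) 1 :=
  MvPolynomial.aeval_single_prod_map_X _ A

theorem simIdeal_le_ker_toricHom (t : CTree α) : simIdeal t ≤ RingHom.ker (toricHom t) := by
  refine Ideal.span_le.mpr ?_
  rintro _ ⟨A, B, -, ⟨v, -, c₁, hc₁, c₂, hc₂, h₁, h₂, hA, hB⟩, rfl⟩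
  rw [← pathVars_map_val] at hA hB
  obtain rfl := Multiset.map_injective Subtype.val_injective hA
  obtain rfl := Multiset.map_injective Subtype.val_injective hB
  rw [SetLike.mem_coe, RingHom.mem_ker, map_sub, toricHom_prod_map_X, toricHom_prod_map_X,
    weightSum_pathVars_of_mem_colS hc₁ h₁, weightSum_pathVars_of_mem_colS hc₂ h₂, sub_self]

end CTree

theorem kernel_toricHom_eq_simIdeal_general {α : Type} (t : CTree α) :
    RingHom.ker (toricHom t) = simIdeal t ∧
    Nonempty ((MvPolynomial (EdgeVar t) ℂ ⧸ simIdeal t) ≃ₐ[ℂ]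
      (Algebra.adjoin ℂ (Set.range (fun d : EdgeVar t =>
        (AddMonoidAlgebra.single (CTree.wt t d.1) (1 : ℂ) :
          AddMonoidAlgebra ℂ (List ℕ → ℤ)))))) := by
  have hker : RingHom.ker (toricHom t) = simIdeal t :=
    le_antisymm
      (MvPolynomial.ker_aeval_single_le _ fun _ _ h =>
        Ideal.Quotient.eq.mp (CTree.quotMonomial_eq_of_weightSum_eq h))
      (CTree.simIdeal_le_ker_toricHom t)
  have hker' : RingHom.ker (toricHom t).rangeRestrict = simIdeal t := by
    rw [AlgHom.ker_rangeRestrict, hker]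
  exact ⟨hker, ⟨(Ideal.quotientEquivAlgOfEq ℂ hker'.symm).trans <|
    (Ideal.quotientKerAlgEquivOfSurjective (toricHom t).rangeRestrict_surjective).trans <|
      Subalgebra.equivOfEq _ _ (Algebra.adjoin_range_eq_range_aeval ℂ _).symm⟩⟩

/-- The kernel of `φ` is the binomial ideal of the relation `∼`;
consequently `ℂ[x_d : d ∈ E(Γ)]` modulo this ideal is isomorphic to the affine
semigroup algebra `ℂ[χ(Γ)]`, the subalgebra of `ℂ[M]` generated by the `t^{w_d}`. -/
theorem kernel_toricHom_eq_simIdeal {α : Type} (t : CTree α) (ht : t.IsColoredTree) :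
    RingHom.ker (toricHom t) = simIdeal t ∧
    Nonempty ((MvPolynomial (EdgeVar t) ℂ ⧸ simIdeal t) ≃ₐ[ℂ]
      (Algebra.adjoin ℂ (Set.range (fun d : EdgeVar t =>
        (AddMonoidAlgebra.single (CTree.wt t d.1) (1 : ℂ) :
          AddMonoidAlgebra ℂ (List ℕ → ℤ)))))) :=
  kernel_toricHom_eq_simIdeal_general t
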